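/- arXiv:2211.17064 — 8 statements merged into one kernel-verified Lean document; each statement's English description precedes it below -/
import Mathlib

section
/- Let g_S(x) = (π/4)·(sinh(πx/2))^{−2}·(πx·cosh(πx/2)/sinh(πx/2) − 1) for x > 0. Then the function x ↦ x·g_S(x) is nonincreasing on (0, ∞); equivalently, for every x > 0 the derivative of x ↦ −x·g_S(x) at x, which equals (π/8)·(sinh(πx/2))^{−2}·(2π²x²·coth²(πx/2) + π²x²·(sinh(πx/2))^{−2} − 6πx·coth(πx/2) + 2) with coth(u) = cosh(u)/sinh(u), is nonnegative. -/
open Real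

/-!
Put `s = sinh (a x / 2)`, `c = cosh (a x / 2)` and `t = a x`. By the half-angle formulas
`2 c² = cosh t + 1`, `2 s² = cosh t - 1`, `2 s c = sinh t`, the bracket in the derivative of
`x ↦ x g(x)` equals `F t / s²` with `F t = (t² + 1) cosh t - 3 t sinh t + 2 t² - 1`.
Now `F 0 = F' 0 = 0`, `F'' 0 = 1`, `F''' 0 = 0` and `F'''' t = 5 t sinh t + (t² + 1) cosh t ≥ 0`
for `t ≥ 0`, so four applications of the monotonicity criterion give `F t ≥ 0` for `t ≥ 0`.
-/

lemma nonneg_of_hasDerivAt_of_deriv_nonneg {f f' : ℝ → ℝ} (hf : ∀ t, HasDerivAt f (f' t) t)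
    (h₀ : 0 ≤ f 0) (hf' : ∀ t, 0 < t → 0 ≤ f' t) : ∀ t, 0 ≤ t → 0 ≤ f t := by
  intro t ht
  have hmono : MonotoneOn f (Set.Ici 0) :=
    monotoneOn_of_hasDerivWithinAt_nonneg (convex_Ici 0)
      (fun t _ => (hf t).continuousAt.continuousWithinAt)
      (fun t _ => (hf t).hasDerivWithinAt)
      (fun t ht => hf' t (by simpa using ht))
  exact h₀.trans (hmono Set.self_mem_Ici ht ht)

lemma sq_sub_two_mul_sinh_add_three_mul_cosh_nonneg {t : ℝ} (ht : 0 ≤ t) :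
    0 ≤ (t ^ 2 - 2) * sinh t + 3 * t * cosh t := by
  revert t
  refine @nonneg_of_hasDerivAt_of_deriv_nonneg _ (fun t => 5 * t * sinh t + (t ^ 2 + 1) * cosh t)
    (fun t => ?_) (by norm_num) (fun t ht => ?_)
  · refine ((((hasDerivAt_pow 2 t).sub_const 2).mul (hasDerivAt_sinh t)).add
      (((hasDerivAt_id' t).const_mul 3).mul (hasDerivAt_cosh t))).congr_deriv ?_
    push_cast
    ring
  · have := sinh_pos_iff.2 ht
    positivity

lemma mul_sinh_add_sq_sub_three_mul_cosh_add_four_nonneg {t : ℝ} (ht : 0 ≤ t) :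
    0 ≤ t * sinh t + (t ^ 2 - 3) * cosh t + 4 := by
  revert t
  refine @nonneg_of_hasDerivAt_of_deriv_nonneg _ _ (fun t => ?_) (by norm_num)
    (fun t ht => sq_sub_two_mul_sinh_add_three_mul_cosh_nonneg ht.le)
  refine ((((hasDerivAt_id' t).mul (hasDerivAt_sinh t)).add
    (((hasDerivAt_pow 2 t).sub_const 3).mul (hasDerivAt_cosh t))).add_const 4).congr_deriv ?_
  push_cast
  ring

lemma sq_sub_two_mul_sinh_sub_mul_cosh_add_four_mul_nonneg {t : ℝ} (ht : 0 ≤ t) :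
    0 ≤ (t ^ 2 - 2) * sinh t - t * cosh t + 4 * t := by
  revert t
  refine @nonneg_of_hasDerivAt_of_deriv_nonneg _ _ (fun t => ?_) (by norm_num)
    (fun t ht => mul_sinh_add_sq_sub_three_mul_cosh_add_four_nonneg ht.le)
  refine (((((hasDerivAt_pow 2 t).sub_const 2).mul (hasDerivAt_sinh t)).sub
    ((hasDerivAt_id' t).mul (hasDerivAt_cosh t))).add
    ((hasDerivAt_id' t).const_mul 4)).congr_deriv ?_
  push_cast
  ring

lemma sq_add_one_mul_cosh_sub_three_mul_sinh_add_two_mul_sq_sub_one_nonneg {t : ℝ}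
    (ht : 0 ≤ t) : 0 ≤ (t ^ 2 + 1) * cosh t - 3 * t * sinh t + 2 * t ^ 2 - 1 := by
  revert t
  refine @nonneg_of_hasDerivAt_of_deriv_nonneg _ _ (fun t => ?_) (by norm_num)
    (fun t ht => sq_sub_two_mul_sinh_sub_mul_cosh_add_four_mul_nonneg ht.le)
  refine ((((((hasDerivAt_pow 2 t).add_const 1).mul (hasDerivAt_cosh t)).sub
    (((hasDerivAt_id' t).const_mul 3).mul (hasDerivAt_sinh t))).add
    ((hasDerivAt_pow 2 t).const_mul 2)).sub_const 1).congr_deriv ?_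
  push_cast
  ring

lemma sinh_half_bracket_eq (a x : ℝ) (hs : sinh (a * x / 2) ≠ 0) :
    2 * a ^ 2 * x ^ 2 * (cosh (a * x / 2) / sinh (a * x / 2)) ^ 2
        + a ^ 2 * x ^ 2 * (sinh (a * x / 2))⁻¹ ^ 2
        - 6 * a * x * (cosh (a * x / 2) / sinh (a * x / 2)) + 2
      = (((a * x) ^ 2 + 1) * cosh (a * x) - 3 * (a * x) * sinh (a * x) + 2 * (a * x) ^ 2 - 1)
        / sinh (a * x / 2) ^ 2 := by
  rw [show a * x = 2 * (a * x / 2) by ring, cosh_two_mul, sinh_two_mul]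
  field_simp
  linear_combination (a ^ 2 * x ^ 2 - 1) * cosh_sq (a * x / 2)

lemma sinh_half_bracket_nonneg {a x : ℝ} (hax : 0 < a * x) :
    0 ≤ 2 * a ^ 2 * x ^ 2 * (cosh (a * x / 2) / sinh (a * x / 2)) ^ 2
        + a ^ 2 * x ^ 2 * (sinh (a * x / 2))⁻¹ ^ 2
        - 6 * a * x * (cosh (a * x / 2) / sinh (a * x / 2)) + 2 := by
  rw [sinh_half_bracket_eq a x (sinh_pos_iff.2 (by positivity)).ne']
  exact div_nonneg
    (sq_add_one_mul_cosh_sub_three_mul_sinh_add_two_mul_sq_sub_one_nonneg hax.le) (sq_nonneg _)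

lemma hasDerivAt_mul_sinh_kernel (a x : ℝ) (hs : sinh (a * x / 2) ≠ 0) :
    HasDerivAt (fun y => y * (a / 4 * (sinh (a * y / 2))⁻¹ ^ 2 *
        (a * y * cosh (a * y / 2) / sinh (a * y / 2) - 1)))
      (-(a / 8 * (sinh (a * x / 2))⁻¹ ^ 2 *
        (2 * a ^ 2 * x ^ 2 * (cosh (a * x / 2) / sinh (a * x / 2)) ^ 2
          + a ^ 2 * x ^ 2 * (sinh (a * x / 2))⁻¹ ^ 2
          - 6 * a * x * (cosh (a * x / 2) / sinh (a * x / 2)) + 2))) x := by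
  have hu : HasDerivAt (fun y => a * y / 2) (a / 2) x := by
    simpa using ((hasDerivAt_id' x).const_mul a).div_const 2
  have hsinh := (hasDerivAt_sinh _).comp x hu
  have hcosh := (hasDerivAt_cosh _).comp x hu
  have hnum := ((hasDerivAt_id' x).const_mul a).mul hcosh
  refine ((hasDerivAt_id' x).mul ((((hsinh.inv hs).pow 2).const_mul (a / 4)).mul
    ((hnum.div hsinh hs).sub_const 1))).congr_deriv ?_
  simp only [Pi.mul_apply, Pi.div_apply, Pi.pow_apply, Pi.inv_apply, Function.comp_apply]
  linear_combination
    (a ^ 2 * x * cosh (a * x / 2) / 4) * (sinh (a * x / 2))⁻¹ ^ 3 * mul_inv_cancel₀ hs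
    - (a ^ 3 * x ^ 2 / 8) * (sinh (a * x / 2))⁻¹ ^ 4 * cosh_sq (a * x / 2)

/-- for
`g_S(x) = (π/4)·(sinh(πx/2))⁻²·(πx·cosh(πx/2)/sinh(πx/2) − 1)` on `(0,∞)`, the function
`x ↦ x·g_S(x)` is nonincreasing on `(0,∞)`; equivalently, the derivative of
`x ↦ −x·g_S(x)` at every `x > 0` equals
`(π/8)·(sinh(πx/2))⁻²·(2π²x²·coth²(πx/2) + π²x²·(sinh(πx/2))⁻² − 6πx·coth(πx/2) + 2)`
(with `coth u = cosh u / sinh u`), which is nonnegative. -/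
theorem hyperbolic_sine_in_L2
    (gS : ℝ → ℝ)
    (hgS : ∀ x : ℝ, 0 < x → gS x = (π / 4) * (Real.sinh (π * x / 2))⁻¹ ^ 2 *
        (π * x * Real.cosh (π * x / 2) / Real.sinh (π * x / 2) - 1)) :
    AntitoneOn (fun x : ℝ => x * gS x) (Set.Ioi 0) ∧
    ∀ x : ℝ, 0 < x →
      deriv (fun y : ℝ => -(y * gS y)) x
          = (π / 8) * (Real.sinh (π * x / 2))⁻¹ ^ 2 *
              (2 * π ^ 2 * x ^ 2 * (Real.cosh (π * x / 2) / Real.sinh (π * x / 2)) ^ 2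
                + π ^ 2 * x ^ 2 * (Real.sinh (π * x / 2))⁻¹ ^ 2
                - 6 * π * x * (Real.cosh (π * x / 2) / Real.sinh (π * x / 2)) + 2) ∧
      0 ≤ (π / 8) * (Real.sinh (π * x / 2))⁻¹ ^ 2 *
            (2 * π ^ 2 * x ^ 2 * (Real.cosh (π * x / 2) / Real.sinh (π * x / 2)) ^ 2
              + π ^ 2 * x ^ 2 * (Real.sinh (π * x / 2))⁻¹ ^ 2
              - 6 * π * x * (Real.cosh (π * x / 2) / Real.sinh (π * x / 2)) + 2) := by
  have hderiv (x : ℝ) (hx : 0 < x) :=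
    (hasDerivAt_mul_sinh_kernel π x (sinh_pos_iff.2 (by positivity)).ne').congr_of_eventuallyEq
      (f₁ := fun y => y * gS y)
      (Filter.eventually_of_mem (Ioi_mem_nhds hx) fun y hy => congrArg (y * ·) (hgS y hy))
  have hnonneg (x : ℝ) (hx : 0 < x) :=
    mul_nonneg (by positivity : 0 ≤ π / 8 * (sinh (π * x / 2))⁻¹ ^ 2)
      (sinh_half_bracket_nonneg (a := π) (x := x) (by positivity))
  refine ⟨antitoneOn_of_deriv_nonpos (convex_Ioi 0)
      (fun x hx => (hderiv x hx).continuousAt.continuousWithinAt) (fun x hx => ?_)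
      (fun x hx => ?_), fun x hx => ⟨(hderiv x hx).neg.deriv.trans (neg_neg _), hnonneg x hx⟩⟩
  · rw [interior_Ioi] at hx
    exact (hderiv x hx).differentiableAt.differentiableWithinAt
  · rw [interior_Ioi] at hx
    rw [(hderiv x hx).deriv]
    exact neg_nonpos.2 (hnonneg x hx)
end

section
/- Let k_S(x) = 1/(x·(e^{πx} − 1)) for x > 0, and for a function f on (0,∞) define (Df)(x) := −d/dx (x·f(x)), with Dⁿ its n-fold iterate. Then (D⁴k_S)(0.9) < 0; in particular D⁴k_S is not nonnegative on (0, ∞). -/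
/-!
With the Euler operator `θ g (x) = x g'(x)` one has `x · D f (x) = -θ (y ↦ y f(y)) (x)`, hence
`x · Dⁿ k_S (x) = (-1)ⁿ θⁿ w (πx)` where `w(t) = 1/(eᵗ - 1)`, as θ commutes with dilations.
Expanding `θⁿ = ∑ₖ S(n,k) tᵏ (d/dt)ᵏ` with Stirling numbers of the second kind, and using
`w' = -(w + w²)` so that every derivative of `w` is a polynomial in `w`, the value
`0.9 · D⁴k_S(0.9)` becomes an explicit polynomial in `t = 0.9π` and `w(t) ≈ 0.0629`. Its sign
follows from interval bounds on `π` and on `e^{0.3π}`.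
-/

open Real

/-- The operator `D` acting on functions on `(0,∞)`: `(Df)(x) = −d/dx (x·f(x))`. -/
noncomputable def DOp (f : ℝ → ℝ) : ℝ → ℝ := fun x => -deriv (fun y => y * f y) x

open Polynomial Finset Filter Topology

noncomputable def eulerOp (g : ℝ → ℝ) : ℝ → ℝ := fun x => x * deriv g x

theorem mul_iterate_DOp (f : ℝ → ℝ) (n : ℕ) (x : ℝ) :
    x * DOp^[n] f x = (-1) ^ n * eulerOp^[n] (fun y => y * f y) x := by
  induction n generalizing x with
  | zero => simp
  | succ n ih =>
    have hfun : (fun y => y * DOp^[n] f y) =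
        fun y => (-1) ^ n * eulerOp^[n] (fun y => y * f y) y := funext ih
    simp only [Function.iterate_succ_apply', DOp, eulerOp, hfun, deriv_const_mul_field]
    ring

theorem eulerOp_iterate_comp_mul_left (g : ℝ → ℝ) (c : ℝ) (n : ℕ) :
    eulerOp^[n] (fun y => g (c * y)) = fun y => eulerOp^[n] g (c * y) := by
  induction n with
  | zero => rfl
  | succ n ih =>
    ext y
    rw [Function.iterate_succ_apply', Function.iterate_succ_apply', ih, eulerOp, eulerOp,
      deriv_comp_mul_left, smul_eq_mul]
    ring

theorem sum_stirlingSecond_succ (a : ℕ → ℝ) (n : ℕ) :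
    ∑ k ∈ range (n + 2), (n + 1).stirlingSecond k * a k =
      ∑ k ∈ range (n + 1), n.stirlingSecond k * (k * a k + a (k + 1)) := by
  have hsucc (k : ℕ) : ((n + 1).stirlingSecond (k + 1) : ℝ) * a (k + 1) =
      (k + 1) * n.stirlingSecond (k + 1) * a (k + 1) + n.stirlingSecond k * a (k + 1) := by
    rw [Nat.stirlingSecond_succ_succ]
    push_cast
    ring
  have hshift : ∑ k ∈ range (n + 1), ((k : ℝ) + 1) * n.stirlingSecond (k + 1) * a (k + 1) =
      ∑ k ∈ range (n + 1), n.stirlingSecond k * (k * a k) := by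
    rw [sum_range_succ, sum_range_succ' _ n, Nat.stirlingSecond_eq_zero_of_lt n.lt_succ_self]
    simp only [CharP.cast_eq_zero, mul_zero, zero_mul, add_zero, Nat.cast_add, Nat.cast_one]
    exact sum_congr rfl fun k _ => by ring
  rw [sum_range_succ', Nat.stirlingSecond_succ_zero, Nat.cast_zero, zero_mul, add_zero]
  simp only [hsucc, sum_add_distrib, hshift, mul_add]

theorem eulerOp_iterate_eq_sum_stirlingSecond {U : Set ℝ} (hU : IsOpen U) (d : ℕ → ℝ → ℝ)
    (hd : ∀ k, ∀ t ∈ U, HasDerivAt (d k) (d (k + 1) t) t) (n : ℕ) {t : ℝ} (ht : t ∈ U) :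
    eulerOp^[n] (d 0) t = ∑ k ∈ range (n + 1), (n.stirlingSecond k : ℝ) * t ^ k * d k t := by
  induction n generalizing t with
  | zero => simp
  | succ n ih =>
    have hloc : eulerOp^[n] (d 0) =ᶠ[𝓝 t]
        fun s => ∑ k ∈ range (n + 1), (n.stirlingSecond k : ℝ) * s ^ k * d k s :=
      eventually_of_mem (hU.mem_nhds ht) fun s hs => ih hs
    have hderiv := HasDerivAt.fun_sum fun k (_ : k ∈ range (n + 1)) =>
      ((hasDerivAt_pow k t).const_mul (n.stirlingSecond k : ℝ)).fun_mul (hd k t ht)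
    have hsum := sum_stirlingSecond_succ (fun k => t ^ k * d k t) n
    simp only [← mul_assoc] at hsum
    rw [Function.iterate_succ_apply', eulerOp, hloc.deriv_eq, hderiv.deriv, hsum, mul_sum]
    refine sum_congr rfl fun k _ => ?_
    rcases k with _ | k
    · simp only [CharP.cast_eq_zero, zero_mul, mul_zero, zero_add, pow_zero, mul_one, zero_add]
      ring
    · simp only [Nat.add_sub_cancel, pow_succ]
      push_cast
      ring

noncomputable def expSubOneInv (t : ℝ) : ℝ := (exp t - 1)⁻¹

theorem hasDerivAt_expSubOneInv {t : ℝ} (ht : t ≠ 0) :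
    HasDerivAt expSubOneInv (-(expSubOneInv t + expSubOneInv t ^ 2)) t := by
  have hne : exp t - 1 ≠ 0 := sub_ne_zero.2 (by rwa [Ne, Real.exp_eq_one_iff])
  refine (((hasDerivAt_exp t).sub_const 1).inv hne).congr_deriv ?_
  rw [expSubOneInv]
  field_simp
  ring

noncomputable def expSubOneInvDerivPoly : ℕ → ℝ[X]
  | 0 => X
  | k + 1 => -(X + X ^ 2) * derivative (expSubOneInvDerivPoly k)

theorem hasDerivAt_eval_expSubOneInv (p : ℝ[X]) {t : ℝ} (ht : t ≠ 0) :
    HasDerivAt (fun s => p.eval (expSubOneInv s))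
      ((-(X + X ^ 2) * derivative p).eval (expSubOneInv t)) t := by
  refine ((p.hasDerivAt _).comp t (hasDerivAt_expSubOneInv ht)).congr_deriv ?_
  simp only [eval_mul, eval_neg, eval_add, eval_X, eval_pow]
  ring

theorem eulerOp_iterate_expSubOneInv (n : ℕ) {t : ℝ} (ht : t ≠ 0) :
    eulerOp^[n] expSubOneInv t = ∑ k ∈ range (n + 1),
      (n.stirlingSecond k : ℝ) * t ^ k * (expSubOneInvDerivPoly k).eval (expSubOneInv t) := by
  have h := eulerOp_iterate_eq_sum_stirlingSecond isOpen_ne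
    (fun k s => (expSubOneInvDerivPoly k).eval (expSubOneInv s))
    (fun k _ hs => hasDerivAt_eval_expSubOneInv _ hs) n ht
  simpa only [expSubOneInvDerivPoly, eval_X] using h

-- At `y = 0` both sides are `0`, since `0⁻¹ = 0`; so the identity holds on all of `ℝ`.
theorem mul_kS_eq (y : ℝ) : y * (1 / (y * (exp (π * y) - 1))) = expSubOneInv (π * y) := by
  rcases eq_or_ne y 0 with rfl | hy
  · simp [expSubOneInv]
  · rw [expSubOneInv, one_div, mul_inv, ← mul_assoc, mul_inv_cancel₀ hy, one_mul]

theorem mul_iterate_DOp_kS (n : ℕ) {x : ℝ} (hx : x ≠ 0) :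
    x * DOp^[n] (fun x : ℝ => 1 / (x * (exp (π * x) - 1))) x = (-1) ^ n *
      ∑ k ∈ range (n + 1), (n.stirlingSecond k : ℝ) * (π * x) ^ k *
        (expSubOneInvDerivPoly k).eval (expSubOneInv (π * x)) := by
  rw [mul_iterate_DOp, funext mul_kS_eq, eulerOp_iterate_comp_mul_left]
  beta_reduce
  rw [eulerOp_iterate_expSubOneInv n (mul_ne_zero pi_ne_zero hx)]

/- `θ⁴ w (t) = w · (eulerFourPos t w - eulerFourNeg t w)` with `w = w(t)`, split by the sign of
the coefficients so that both parts are monotone for `t, w ≥ 0`. -/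
noncomputable def eulerFourPos (t w : ℝ) : ℝ :=
  7 * t ^ 2 * (1 + 3 * w + 2 * w ^ 2) +
    t ^ 4 * (1 + 15 * w + 50 * w ^ 2 + 60 * w ^ 3 + 24 * w ^ 4)

noncomputable def eulerFourNeg (t w : ℝ) : ℝ :=
  t * (1 + w) + 6 * t ^ 3 * (1 + 7 * w + 12 * w ^ 2 + 6 * w ^ 3)

theorem eulerFourPos_le {t t' w w' : ℝ} (ht : 0 ≤ t) (hw : 0 ≤ w) (htt' : t ≤ t')
    (hww' : w ≤ w') :
    eulerFourPos t w ≤ eulerFourPos t' w' := by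
  unfold eulerFourPos
  gcongr

theorem eulerFourNeg_le {t t' w w' : ℝ} (ht : 0 ≤ t) (hw : 0 ≤ w) (htt' : t ≤ t')
    (hww' : w ≤ w') :
    eulerFourNeg t w ≤ eulerFourNeg t' w' := by
  have ht' : 0 ≤ t' := ht.trans htt'
  unfold eulerFourNeg
  gcongr

theorem sum_stirlingSecond_four_eq (t w : ℝ) :
    ∑ k ∈ range 5, (Nat.stirlingSecond 4 k : ℝ) * t ^ k * (expSubOneInvDerivPoly k).eval w =
      w * (eulerFourPos t w - eulerFourNeg t w) := by
  simp only [sum_range_succ, range_one, sum_singleton, Nat.stirlingSecond, CharP.cast_eq_zero,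
    pow_zero, mul_one, expSubOneInvDerivPoly, eval_X, zero_mul, zero_add, mul_zero, add_zero,
    Nat.cast_one, pow_one, one_mul, neg_add_rev, derivative_X, eval_add, eval_neg, eval_pow,
    Nat.reduceAdd, Nat.reduceMul, Nat.cast_ofNat, derivative_neg, derivative_X_pow_succ, map_add,
    map_one, eval_mul, eval_one, derivative_mul, derivative_one, neg_zero]
  rw [eulerFourPos, eulerFourNeg]
  ring

theorem iterate_four_DOp_kS {x : ℝ} (hx : x ≠ 0) :
    DOp^[4] (fun x : ℝ => 1 / (x * (exp (π * x) - 1))) x =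
      expSubOneInv (π * x) * (eulerFourPos (π * x) (expSubOneInv (π * x)) -
        eulerFourNeg (π * x) (expSubOneInv (π * x))) / x := by
  rw [eq_div_iff hx, mul_comm, mul_iterate_DOp_kS 4 hx, sum_stirlingSecond_four_eq]
  ring

-- `0.3π ≤ 1` puts the Taylor bounds of `exp` in range, and `e^{0.9π} = (e^{0.3π})³`.
theorem exp_three_tenths_pi_mem : exp (π * 0.3) ∈ Set.Icc 2.5662 2.5664 := by
  constructor
  · calc (2.5662 : ℝ) ≤ ∑ m ∈ range 8, (3.1415 * 0.3 : ℝ) ^ m / m.factorial := by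
          norm_num [sum_range_succ, Nat.factorial]
      _ ≤ exp (3.1415 * 0.3) := sum_le_exp_of_nonneg (by norm_num) 8
      _ ≤ exp (π * 0.3) := by gcongr; exact pi_gt_d4.le
  · calc exp (π * 0.3) ≤ exp (3.1416 * 0.3) := by gcongr; exact pi_lt_d4.le
      _ ≤ ∑ m ∈ range 8, (3.1416 * 0.3 : ℝ) ^ m / m.factorial +
          (3.1416 * 0.3) ^ 8 * (8 + 1) / (Nat.factorial 8 * 8) :=
        Real.exp_bound' (by norm_num) (by norm_num) (by norm_num)
      _ ≤ 2.5664 := by norm_num [sum_range_succ, Nat.factorial]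

theorem expSubOneInv_nine_tenths_pi_mem :
    expSubOneInv (π * 0.9) ∈ Set.Icc (1 / (2.5664 ^ 3 - 1)) (1 / (2.5662 ^ 3 - 1)) := by
  obtain ⟨hlo, hhi⟩ := exp_three_tenths_pi_mem
  have hcube : exp (π * 0.9) = exp (π * 0.3) ^ 3 := by
    rw [← Real.exp_nat_mul]
    ring_nf
  rw [expSubOneInv, hcube, ← one_div]
  have hgt : 1 < exp (π * 0.3) ^ 3 := one_lt_pow₀ (by linarith) (by norm_num)
  constructor <;> gcongr

/-- for `k_S(x) = 1/(x·(e^{πx} − 1))`, one has `(D⁴k_S)(0.9) < 0`; in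
particular `D⁴k_S` is not nonnegative on `(0,∞)`. -/
theorem hyperbolic_sine_not_in_L3 :
    (DOp^[4] (fun x : ℝ => 1 / (x * (Real.exp (π * x) - 1)))) 0.9 < 0 ∧
    ¬ ∀ x : ℝ, 0 < x →
        0 ≤ (DOp^[4] (fun x : ℝ => 1 / (x * (Real.exp (π * x) - 1)))) x := by
  obtain ⟨hwlo, hwhi⟩ := expSubOneInv_nine_tenths_pi_mem
  have htlo : 3.1415 * 0.9 ≤ π * 0.9 := by linarith [pi_gt_d4]
  have hthi : π * 0.9 ≤ 3.1416 * 0.9 := by linarith [pi_lt_d4]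
  have hw : 0 < expSubOneInv (π * 0.9) := lt_of_lt_of_le (by norm_num) hwlo
  have hsign : eulerFourPos (π * 0.9) (expSubOneInv (π * 0.9)) <
      eulerFourNeg (π * 0.9) (expSubOneInv (π * 0.9)) :=
    calc eulerFourPos (π * 0.9) (expSubOneInv (π * 0.9))
        ≤ eulerFourPos (3.1416 * 0.9) (1 / (2.5662 ^ 3 - 1)) :=
          eulerFourPos_le (by positivity) hw.le hthi hwhi
      _ < eulerFourNeg (3.1415 * 0.9) (1 / (2.5664 ^ 3 - 1)) := by
          norm_num [eulerFourPos, eulerFourNeg]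
      _ ≤ eulerFourNeg (π * 0.9) (expSubOneInv (π * 0.9)) :=
          eulerFourNeg_le (by norm_num) (by norm_num) htlo hwlo
  have hneg : DOp^[4] (fun x : ℝ => 1 / (x * (exp (π * x) - 1))) 0.9 < 0 := by
    rw [iterate_four_DOp_kS (by norm_num)]
    exact div_neg_of_neg_of_pos (mul_neg_of_pos_of_neg hw (sub_neg.2 hsign)) (by norm_num)
  exact ⟨hneg, fun h => (h 0.9 (by norm_num)).not_gt hneg⟩
end

section
/- Let h_C(x) = (π/4)·cosh(πx/2)/sinh²(πx/2) for x > 0. Then for every x > 0, the derivative of x ↦ −x·h_C(x) at x equals (π/8)·(sinh(πx/2))^{−1}·(πx·coth²(πx/2) − 2·coth(πx/2) + πx·(sinh(πx/2))^{−2}) with coth(u) = cosh(u)/sinh(u), and this quantity is nonnegative for all x > 0. -/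
/-!
With `u = πx/2` one has `-x·h_C(x) = -(1/2)·g(u)` for `g t = t cosh t / sinh² t`, and
`cosh² = 1 + sinh²` gives `g' t = (sinh t cosh t - t cosh² t - t) / sinh³ t`. Hence the
derivative is `(π/4)(u cosh² u + u - sinh u cosh u) / sinh³ u`, which is nonnegative because
`sinh u ≤ u cosh u` for `u ≥ 0` (mean value theorem, `cosh` being increasing on `[0, u]`).
-/

open Real

theorem Real.sinh_le_mul_cosh {u : ℝ} (hu : 0 ≤ u) : sinh u ≤ u * cosh u := by
  have hderiv_le : ∀ t ∈ interior (Set.Icc 0 u), deriv sinh t ≤ cosh u := by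
    intro t ht
    rw [interior_Icc] at ht
    rw [deriv_sinh, cosh_le_cosh, abs_of_pos ht.1, abs_of_nonneg hu]
    exact ht.2.le
  simpa [mul_comm] using (convex_Icc 0 u).image_sub_le_mul_sub_of_deriv_le
    continuous_sinh.continuousOn differentiable_sinh.differentiableOn hderiv_le
    0 (Set.left_mem_Icc.2 hu) u (Set.right_mem_Icc.2 hu) hu

theorem Real.sinh_mul_cosh_le {u : ℝ} (hu : 0 ≤ u) :
    sinh u * cosh u ≤ u * cosh u ^ 2 + u := by
  nlinarith [mul_le_mul_of_nonneg_right (sinh_le_mul_cosh hu) (cosh_pos u).le]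

theorem Real.hasDerivAt_mul_cosh_div_sinh_sq {t : ℝ} (ht : sinh t ≠ 0) :
    HasDerivAt (fun t => t * cosh t / sinh t ^ 2)
      ((sinh t * cosh t - t * cosh t ^ 2 - t) / sinh t ^ 3) t := by
  refine (((hasDerivAt_id' t).mul (hasDerivAt_cosh t)).div ((hasDerivAt_sinh t).pow 2)
    (pow_ne_zero 2 ht)).congr_deriv ?_
  simp only [Pi.pow_apply, Pi.mul_apply]
  field_simp
  linear_combination (-t * sinh t) * cosh_sq_sub_sinh_sq t

/-- for `h_C(x) = (π/4)·cosh(πx/2)/sinh²(πx/2)` on `(0,∞)`, the derivative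
of `x ↦ −x·h_C(x)` equals
`(π/8)·(sinh(πx/2))⁻¹·(πx·coth²(πx/2) − 2·coth(πx/2) + πx·(sinh(πx/2))⁻²)`
(with `coth u = cosh u / sinh u`), and this quantity is nonnegative for all `x > 0`. -/
theorem hyperbolic_cosine_bdlp_levy_density_selfdecomposable
    (hC : ℝ → ℝ)
    (hhC : ∀ x : ℝ, 0 < x → hC x = (π / 4) * Real.cosh (π * x / 2) / Real.sinh (π * x / 2) ^ 2) :
    ∀ x : ℝ, 0 < x →
      deriv (fun y : ℝ => -(y * hC y)) x
          = (π / 8) * (Real.sinh (π * x / 2))⁻¹ *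
              (π * x * (Real.cosh (π * x / 2) / Real.sinh (π * x / 2)) ^ 2
                - 2 * (Real.cosh (π * x / 2) / Real.sinh (π * x / 2))
                + π * x * (Real.sinh (π * x / 2))⁻¹ ^ 2) ∧
      0 ≤ (π / 8) * (Real.sinh (π * x / 2))⁻¹ *
            (π * x * (Real.cosh (π * x / 2) / Real.sinh (π * x / 2)) ^ 2
              - 2 * (Real.cosh (π * x / 2) / Real.sinh (π * x / 2))
              + π * x * (Real.sinh (π * x / 2))⁻¹ ^ 2) := by
  intro x hx
  have hu : 0 < π * x / 2 := by positivity
  have heq : (fun y => -(y * hC y)) =ᶠ[nhds x]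
      fun y => -(1 / 2) * ((π * y / 2) * cosh (π * y / 2) / sinh (π * y / 2) ^ 2) := by
    filter_upwards [Ioi_mem_nhds hx] with y hy
    rw [hhC y hy]
    ring
  set u := π * x / 2
  have hs : 0 < sinh u := sinh_pos_iff.2 hu
  have hderiv :
      HasDerivAt (fun y => -(1 / 2) * ((π * y / 2) * cosh (π * y / 2) / sinh (π * y / 2) ^ 2))
      (-(1 / 2) * ((sinh u * cosh u - u * cosh u ^ 2 - u) / sinh u ^ 3 * (π / 2))) x :=
    ((hasDerivAt_mul_cosh_div_sinh_sq hs.ne').comp x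
      (((hasDerivAt_id' x).const_mul π).div_const 2 |>.congr_deriv (by rw [mul_one]))).const_mul _
  have hclosed : (π / 8) * (sinh u)⁻¹ *
      (π * x * (cosh u / sinh u) ^ 2 - 2 * (cosh u / sinh u) + π * x * (sinh u)⁻¹ ^ 2) =
      π / 4 * (u * cosh u ^ 2 + u - sinh u * cosh u) / sinh u ^ 3 := by
    field_simp
    ring
  rw [heq.deriv_eq, hderiv.deriv, hclosed]
  refine ⟨by ring, div_nonneg (mul_nonneg (by positivity) ?_) (by positivity)⟩
  linarith [sinh_mul_cosh_le hu.le]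
end

section
/- Fix α > 0 and let k_α(x) = e^{−απx}/(x·(1 − e^{−πx})) for x > 0. Then for every x > 0, the derivative of x ↦ −x·k_α(x) at x equals π·e^{−απx}·(α + (1 − α)·e^{−πx})/(1 − e^{−πx})², and this quantity is strictly positive for all x > 0; hence x ↦ x·k_α(x) is strictly decreasing on (0, ∞). -/
/-!
Away from `0`, `x · k_α(x) = e^{-απx} / (1 - e^{-πx})`, so the quotient rule gives the derivative
of `-x · k_α(x)` in closed form. Writing `t = e^{-πx} ∈ (0, 1)`, its numerator factor is
`α + (1 - α) t = α (1 - t) + t > 0`, and the mean value theorem turns the sign into monotonicity.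
-/

open Real Set

lemma exp_neg_mul_lt_one {b x : ℝ} (hb : 0 < b) (hx : 0 < x) : exp (-(b * x)) < 1 :=
  exp_lt_one_iff.mpr (neg_neg_of_pos (mul_pos hb hx))

lemma hasDerivAt_exp_neg_mul_div_one_sub_exp_neg_mul (a b x : ℝ) (hx : exp (-(b * x)) ≠ 1) :
    HasDerivAt (fun y => exp (-(a * y)) / (1 - exp (-(b * y))))
      (-(exp (-(a * x)) * (a + (b - a) * exp (-(b * x)))) / (1 - exp (-(b * x))) ^ 2) x := by
  have hexp : ∀ c : ℝ, HasDerivAt (fun y => exp (-(c * y))) (exp (-(c * x)) * -c) x := fun c =>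
    (((hasDerivAt_id x).const_mul c).neg.exp).congr_deriv (by simp)
  exact ((hexp a).div ((hexp b).const_sub 1) (sub_ne_zero.mpr hx.symm)).congr_deriv (by ring)

lemma logistic_levy_density_derivative_pos {α x : ℝ} (hα : 0 ≤ α) (hx : 0 < x) :
    0 < π * exp (-(α * π * x)) * (α + (1 - α) * exp (-(π * x))) / (1 - exp (-(π * x))) ^ 2 := by
  have ht : exp (-(π * x)) < 1 := exp_neg_mul_lt_one pi_pos hx
  have hnum : 0 < α + (1 - α) * exp (-(π * x)) := by
    rw [show α + (1 - α) * exp (-(π * x)) = α * (1 - exp (-(π * x))) + exp (-(π * x)) by ring]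
    exact add_pos_of_nonneg_of_pos (mul_nonneg hα (sub_pos.mpr ht).le) (exp_pos _)
  have hden : 0 < (1 - exp (-(π * x))) ^ 2 := pow_pos (sub_pos.mpr ht) 2
  positivity

lemma hasDerivAt_mul_logistic_levy_density (α : ℝ) {kα : ℝ → ℝ}
    (hkα : ∀ x : ℝ, 0 < x → kα x = exp (-(α * π * x)) / (x * (1 - exp (-(π * x)))))
    {x : ℝ} (hx : 0 < x) :
    HasDerivAt (fun y => y * kα y)
      (-(π * exp (-(α * π * x)) * (α + (1 - α) * exp (-(π * x))) / (1 - exp (-(π * x))) ^ 2))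
      x := by
  have hquot : (fun y => exp (-(α * π * y)) / (1 - exp (-(π * y)))) =ᶠ[nhds x]
      fun y => y * kα y := by
    filter_upwards [Ioi_mem_nhds hx] with y (hy : 0 < y)
    rw [hkα y hy, mul_div_assoc', mul_div_mul_left _ _ hy.ne']
  refine ((hasDerivAt_exp_neg_mul_div_one_sub_exp_neg_mul (α * π) π x
    (exp_neg_mul_lt_one pi_pos hx).ne).congr_of_eventuallyEq hquot.symm).congr_deriv ?_
  ring

/-- for `α > 0` and `k_α(x) = e^{−απx}/(x·(1 − e^{−πx}))` on `(0,∞)`, the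
derivative of `x ↦ −x·k_α(x)` equals
`π·e^{−απx}·(α + (1 − α)·e^{−πx})/(1 − e^{−πx})²`, which is strictly positive; hence
`x ↦ x·k_α(x)` is strictly decreasing on `(0,∞)`. -/
theorem logistic_levy_density_selfdecomposable
    (α : ℝ) (hα : 0 < α) (kα : ℝ → ℝ)
    (hkα : ∀ x : ℝ, 0 < x →
      kα x = Real.exp (-(α * π * x)) / (x * (1 - Real.exp (-(π * x))))) :
    (∀ x : ℝ, 0 < x →
      deriv (fun y : ℝ => -(y * kα y)) x
          = π * Real.exp (-(α * π * x)) * (α + (1 - α) * Real.exp (-(π * x)))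
              / (1 - Real.exp (-(π * x))) ^ 2 ∧
      0 < π * Real.exp (-(α * π * x)) * (α + (1 - α) * Real.exp (-(π * x)))
            / (1 - Real.exp (-(π * x))) ^ 2) ∧
    StrictAntiOn (fun x : ℝ => x * kα x) (Set.Ioi 0) := by
  have hderiv := fun x (hx : 0 < x) => hasDerivAt_mul_logistic_levy_density α hkα hx
  refine ⟨fun x hx => ⟨by simpa using (hderiv x hx).neg.deriv,
    logistic_levy_density_derivative_pos hα.le hx⟩, ?_⟩
  refine strictAntiOn_of_deriv_neg (convex_Ioi 0)
    (fun x hx => (hderiv x hx).continuousAt.continuousWithinAt) fun x hx => ?_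
  rw [interior_Ioi] at hx
  rw [(hderiv x hx).deriv]
  exact neg_neg_of_pos (logistic_levy_density_derivative_pos hα.le hx)
end

section
/- For every real α > 0 and every real t, the infinite product ∏_{k=1}^{∞} 1/(1 + (t/((α + k − 1)π))²) converges and equals |Γ(α + it/π)|²/Γ(α)², where Γ is the complex Gamma function. -/
/-!
Euler's limit formula `Γ(s) = lim n^s n! / (s (s+1) ⋯ (s+n))` at `s = α + iy` and at `s = α`:
since `|n^(α+iy)| = n^α`, the `n^s n!` factors cancel in absolute value, and the product of
`(α+k)² / ((α+k)² + y²)` over `k ≤ n` equals `|Γₙ(α+iy)|² / Γₙ(α)²`.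
The product converges unconditionally because `∑ (y/(α+k))²` does.
-/

open Real Filter Finset Topology

theorem Complex.norm_GammaSeq (s : ℂ) {n : ℕ} (hn : n ≠ 0) :
    ‖Complex.GammaSeq s n‖ = n ^ s.re * n.factorial / ∏ j ∈ range (n + 1), ‖s + j‖ := by
  rw [Complex.GammaSeq, norm_div, norm_mul, norm_prod, ← Complex.ofReal_natCast,
    Complex.norm_cpow_eq_rpow_re_of_pos (Nat.cast_pos.mpr (Nat.pos_of_ne_zero hn)),
    Complex.norm_natCast]

theorem Complex.norm_sq_ofReal_add_mul_I_add_natCast (a y : ℝ) (j : ℕ) :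
    ‖(a : ℂ) + y * Complex.I + j‖ ^ 2 = (a + j) ^ 2 + y ^ 2 := by
  rw [← Complex.normSq_eq_norm_sq, add_right_comm, ← Complex.normSq_add_mul_I]
  push_cast
  rfl

theorem one_div_one_add_div_sq {a : ℝ} (ha : a ≠ 0) (y : ℝ) :
    1 / (1 + (y / a) ^ 2) = a ^ 2 / (a ^ 2 + y ^ 2) := by
  field_simp

theorem add_natCast_ne_zero_of_ne_neg_natCast {α : ℝ} (hα : ∀ m : ℕ, α ≠ -m) (k : ℕ) :
    α + k ≠ 0 :=
  fun h => hα k (eq_neg_of_add_eq_zero_left h)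

theorem prod_range_one_div_one_add_div_sq_eq_GammaSeq {α : ℝ} (hα : ∀ m : ℕ, α ≠ -m) (y : ℝ)
    {n : ℕ} (hn : n ≠ 0) :
    ∏ k ∈ range (n + 1), 1 / (1 + (y / (α + k)) ^ 2) =
      ‖Complex.GammaSeq (α + y * Complex.I) n‖ ^ 2 / Real.GammaSeq α n ^ 2 := by
  have hα' := add_natCast_ne_zero_of_ne_neg_natCast hα
  have hpow : (n : ℝ) ^ α * n.factorial ≠ 0 := by positivity
  have hre : ((α : ℂ) + y * Complex.I).re = α := by simp
  rw [Complex.norm_GammaSeq _ hn, hre, Real.GammaSeq, div_pow, div_pow,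
    div_div_div_cancel_left' _ _ (pow_ne_zero 2 hpow), ← prod_pow, ← prod_pow, ← prod_div_distrib]
  refine prod_congr rfl fun k _ => ?_
  rw [Complex.norm_sq_ofReal_add_mul_I_add_natCast, one_div_one_add_div_sq (hα' k)]

theorem tendsto_prod_range_one_div_one_add_div_sq {α : ℝ} (hα : ∀ m : ℕ, α ≠ -m) (y : ℝ) :
    Tendsto (fun n => ∏ k ∈ range n, 1 / (1 + (y / (α + k)) ^ 2)) atTop
      (𝓝 (‖Complex.Gamma (α + y * Complex.I)‖ ^ 2 / Real.Gamma α ^ 2)) := by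
  rw [← tendsto_add_atTop_iff_nat 1]
  have hlim := (((Complex.GammaSeq_tendsto_Gamma (α + y * Complex.I)).norm.pow 2).div
    ((Real.GammaSeq_tendsto_Gamma α).pow 2) (pow_ne_zero 2 (Real.Gamma_ne_zero hα)))
  refine hlim.congr' ?_
  filter_upwards [eventually_ne_atTop 0] with n hn
  exact (prod_range_one_div_one_add_div_sq_eq_GammaSeq hα y hn).symm

theorem summable_div_add_natCast_sq (α y : ℝ) :
    Summable fun k : ℕ => (y / (α + k)) ^ 2 :=
  ((Real.summable_one_div_nat_add_rpow α 2).mpr one_lt_two).mul_left (y ^ 2) |>.congr fun k => by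
    rw [Real.rpow_two, sq_abs, div_pow, add_comm]
    ring

theorem multipliable_one_div_one_add_div_sq (α y : ℝ) :
    Multipliable fun k : ℕ => 1 / (1 + (y / (α + k)) ^ 2) := by
  refine Real.multipliable_of_summable_log (fun k => by positivity) ?_
  exact (Real.summable_log_one_add_of_summable (summable_div_add_natCast_sq α y)).neg.congr
    fun k => by rw [one_div, Real.log_inv]

theorem hasProd_one_div_one_add_div_sq {α : ℝ} (hα : ∀ m : ℕ, α ≠ -m) (y : ℝ) :
    HasProd (fun k : ℕ => 1 / (1 + (y / (α + k)) ^ 2))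
      (‖Complex.Gamma (α + y * Complex.I)‖ ^ 2 / Real.Gamma α ^ 2) :=
  ((multipliable_one_div_one_add_div_sq α y).hasProd_iff_tendsto_nat).mpr
    (tendsto_prod_range_one_div_one_add_div_sq hα y)

/-- for every real `α > 0` and real `t`, the infinite product
`∏_{k=1}^∞ 1/(1 + (t/((α + k − 1)π))²)` converges and equals `|Γ(α + it/π)|²/Γ(α)²`,
where `Γ` is the complex Gamma function. -/
theorem hasProd_logistic_charfun (α : ℝ) (hα : 0 < α) (t : ℝ) :
    HasProd (fun k : ℕ => 1 / (1 + (t / ((α + (k : ℝ)) * π)) ^ 2))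
      (‖Complex.Gamma ((α : ℂ) + (t / π : ℝ) * Complex.I)‖ ^ 2
        / Real.Gamma α ^ 2) := by
  have hα' : ∀ m : ℕ, α ≠ -m := fun m => by linarith [(m.cast_nonneg : (0 : ℝ) ≤ m)]
  simpa only [div_div, mul_comm π] using hasProd_one_div_one_add_div_sq hα' (t / π)
end

section
/- For every real t, the integral ∫_0^∞ (cos(tx) − 1)·e^{−x}/x dx converges and equals −(1/2)·log(1 + t²). -/
open Real MeasureTheory Set

/-! Differentiate under the integral sign: the `t`-derivative of the integrand is
`-sin (t * x) * exp (-x)`, dominated by `exp (-x)`, so the integral has `t`-derivative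
`-∫ sin (t * x) * exp (-x) = -t / (1 + t ^ 2)`, the imaginary part of `-∫ exp ((-1 + t i) x)`.
This is also the derivative of `-(1/2) * log (1 + t ^ 2)`, and both sides vanish at `t = 0`. -/

theorem norm_cos_mul_sub_one_mul_exp_neg_div_le (t : ℝ) {x : ℝ} (hx : 0 < x) :
    ‖(cos (t * x) - 1) * exp (-x) / x‖ ≤ |t| * exp (-x) := by
  have hcos : |cos (t * x) - 1| ≤ |t| * x := by
    simpa [abs_mul, abs_of_pos hx] using abs_cos_sub_cos_le (t * x) 0
  rw [norm_div, norm_mul, Real.norm_of_nonneg (exp_pos _).le, Real.norm_of_nonneg hx.le,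
    div_le_iff₀ hx, mul_right_comm]
  exact mul_le_mul_of_nonneg_right hcos (exp_pos _).le

theorem integrableOn_cos_mul_sub_one_mul_exp_neg_div (t : ℝ) :
    IntegrableOn (fun x : ℝ => (cos (t * x) - 1) * exp (-x) / x) (Ioi 0) := by
  refine Integrable.mono' ((integrableOn_exp_neg_Ioi 0).const_mul |t|) ?_ ?_
  · exact ContinuousOn.aestronglyMeasurable (by fun_prop (disch := grind)) measurableSet_Ioi
  · filter_upwards [ae_restrict_mem measurableSet_Ioi] with x hx
    exact norm_cos_mul_sub_one_mul_exp_neg_div_le t hx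

theorem integral_Ioi_sin_mul_mul_exp_neg (t : ℝ) :
    ∫ x in Ioi (0 : ℝ), sin (t * x) * exp (-x) = t / (1 + t ^ 2) := by
  set a : ℂ := -1 + t * Complex.I
  have ha : a.re < 0 := by simp [a]
  have him (x : ℝ) : (Complex.exp (a * x)).im = sin (t * x) * exp (-x) := by
    simp [a, Complex.exp_im, mul_comm]
  calc ∫ x in Ioi (0 : ℝ), sin (t * x) * exp (-x)
      = (∫ x in Ioi (0 : ℝ), Complex.exp (a * x)).im := by
        simp_rw [← him]
        exact integral_im (integrableOn_exp_mul_complex_Ioi ha 0)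
    _ = t / (1 + t ^ 2) := by
        simp [integral_exp_mul_complex_Ioi ha, a, Complex.div_im, Complex.normSq]
        ring

theorem hasDerivAt_integral_cos_mul_sub_one_mul_exp_neg_div (t : ℝ) :
    HasDerivAt (fun s : ℝ => ∫ x in Ioi (0 : ℝ), (cos (s * x) - 1) * exp (-x) / x)
      (-(t / (1 + t ^ 2))) t := by
  have hderiv (s : ℝ) {x : ℝ} (hx : x ≠ 0) :
      HasDerivAt (fun s => (cos (s * x) - 1) * exp (-x) / x) (-(sin (s * x) * exp (-x))) s := by
    have h := (((hasDerivAt_mul_const (x := s) x).cos.sub_const 1).mul_const (exp (-x))).div_const x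
    exact h.congr_deriv (by field_simp)
  have hbound (s x : ℝ) : ‖-(sin (s * x) * exp (-x))‖ ≤ exp (-x) := by
    rw [norm_neg, norm_mul, Real.norm_of_nonneg (exp_pos _).le]
    exact mul_le_of_le_one_left (exp_pos _).le (abs_sin_le_one _)
  have hsin : IntegrableOn (fun x => -(sin (t * x) * exp (-x))) (Ioi 0) :=
    (integrableOn_exp_neg_Ioi 0).mono' (by fun_prop) (.of_forall (hbound t))
  have h := hasDerivAt_integral_of_dominated_loc_of_deriv_le (μ := volume.restrict (Ioi 0))
    (F' := fun s x => -(sin (s * x) * exp (-x))) (x₀ := t) Filter.univ_mem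
    (.of_forall fun s => (integrableOn_cos_mul_sub_one_mul_exp_neg_div s).aestronglyMeasurable)
    (integrableOn_cos_mul_sub_one_mul_exp_neg_div t) hsin.aestronglyMeasurable
    (.of_forall fun x s _ => hbound s x) (integrableOn_exp_neg_Ioi 0)
    (ae_restrict_of_forall_mem measurableSet_Ioi fun x hx s _ => hderiv s (ne_of_gt hx))
  simpa [integral_neg, integral_Ioi_sin_mul_mul_exp_neg] using h.2

theorem hasDerivAt_neg_half_mul_log_one_add_sq (t : ℝ) :
    HasDerivAt (fun s : ℝ => -(1 / 2) * log (1 + s ^ 2)) (-(t / (1 + t ^ 2))) t := by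
  have h := (((hasDerivAt_pow 2 t).const_add 1).log (by positivity)).const_mul (-(1 / 2) : ℝ)
  refine h.congr_deriv ?_
  field_simp
  norm_num

/-- for every real `t`, the integral
`∫_0^∞ (cos(tx) − 1)·e^{−x}/x dx` converges and equals `−(1/2)·log(1 + t²)`. -/
theorem laplace_levy_exponent (t : ℝ) :
    IntegrableOn (fun x : ℝ => (Real.cos (t * x) - 1) * Real.exp (-x) / x) (Set.Ioi 0) ∧
    (∫ x in Set.Ioi (0 : ℝ), (Real.cos (t * x) - 1) * Real.exp (-x) / x)
      = -(1 / 2) * Real.log (1 + t ^ 2) := by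
  refine ⟨integrableOn_cos_mul_sub_one_mul_exp_neg_div t, ?_⟩
  have hF := hasDerivAt_integral_cos_mul_sub_one_mul_exp_neg_div
  have hG := hasDerivAt_neg_half_mul_log_one_add_sq
  refine isOpen_univ.eqOn_of_deriv_eq isPreconnected_univ
    (fun s _ => (hF s).differentiableAt.differentiableWithinAt)
    (fun s _ => (hG s).differentiableAt.differentiableWithinAt)
    (fun s _ => (hF s).deriv.trans (hG s).deriv.symm) (mem_univ 0) (by simp) (mem_univ t)
end

section
/- For every real t ≠ 0, the integral ∫_0^∞ (cos(tx) − 1)·2/(x·(e^{πx} − 1)) dx converges and equals log(t/sinh(t)) (note t/sinh(t) > 0 for all t ≠ 0). -/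
/-!
Expanding `1 / (e^{πx} - 1) = ∑_{n ≥ 0} e^{-(n+1)πx}` turns the integral into a series of
Frullani-type integrals `∫_0^∞ (cos(tx) - 1) e^{-ax} / x dx = -½ log(1 + t²/a²)`, each computed
by writing `(1 - cos(tx)) / x = ∫_0^t sin(sx) ds` and swapping the order of integration against
the Laplace transform `∫_0^∞ sin(sx) e^{-ax} dx = s / (a² + s²)`. All terms have the same sign,
so the termwise integration is justified by the summability of their integrals, and the
resulting series `-∑ log(1 + t²/((n+1)π)²)` sums to `-log(sinh t / t)` by Euler's product
for `sinh`.
-/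

open Real MeasureTheory Set Filter Topology

theorem integrable_of_hasSum_of_summable_integral_norm {α E ι : Type*} [MeasurableSpace α]
    {μ : Measure α} [NormedAddCommGroup E] [Countable ι] {F : ι → α → E} {f : α → E}
    (hF_int : ∀ i, Integrable (F i) μ) (hF_sum : Summable fun i ↦ ∫ a, ‖F i a‖ ∂μ)
    (hf : ∀ᵐ a ∂μ, HasSum (F · a) (f a)) : Integrable f μ := by
  refine ⟨aestronglyMeasurable_of_tendsto_ae atTop
    (fun s ↦ Finset.aestronglyMeasurable_fun_sum s fun i _ ↦ (hF_int i).1) hf, ?_⟩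
  have hF_lint (i : ι) : ∫⁻ a, ‖F i a‖ₑ ∂μ = ENNReal.ofReal (∫ a, ‖F i a‖ ∂μ) :=
    (ofReal_integral_norm_eq_lintegral_enorm (hF_int i)).symm
  calc ∫⁻ a, ‖f a‖ₑ ∂μ ≤ ∫⁻ a, ∑' i, ‖F i a‖ₑ ∂μ := by
        refine lintegral_mono_ae (hf.mono fun a ha ↦ ?_)
        rw [← ha.tsum_eq]
        exact enorm_tsum_le_tsum_enorm
    _ = ∑' i, ENNReal.ofReal (∫ a, ‖F i a‖ ∂μ) := by
        rw [lintegral_tsum fun i ↦ (hF_int i).1.enorm]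
        exact tsum_congr hF_lint
    _ = ENNReal.ofReal (∑' i, ∫ a, ‖F i a‖ ∂μ) :=
        (ENNReal.ofReal_tsum_of_nonneg (fun i ↦ integral_nonneg fun a ↦ norm_nonneg _) hF_sum).symm
    _ < ⊤ := ENNReal.ofReal_lt_top

theorem hasSum_integral_of_hasSum_of_summable_integral_norm {α E ι : Type*} [MeasurableSpace α]
    {μ : Measure α} [NormedAddCommGroup E] [NormedSpace ℝ E] [Countable ι] {F : ι → α → E}
    {f : α → E} (hF_int : ∀ i, Integrable (F i) μ) (hF_sum : Summable fun i ↦ ∫ a, ‖F i a‖ ∂μ)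
    (hf : ∀ᵐ a ∂μ, HasSum (F · a) (f a)) : HasSum (fun i ↦ ∫ a, F i a ∂μ) (∫ a, f a ∂μ) := by
  rw [integral_congr_ae (hf.mono fun a ha ↦ ha.tsum_eq.symm)]
  exact hasSum_integral_of_summable_integral_norm hF_int hF_sum

theorem integral_sin_mul_exp_neg_mul {a : ℝ} (ha : 0 < a) (s : ℝ) :
    ∫ x in Ioi 0, sin (s * x) * exp (-(a * x)) = s / (a ^ 2 + s ^ 2) := by
  have hre : (-a + s * Complex.I).re < 0 := by simpa using ha
  have h := integral_im (integrableOn_exp_mul_complex_Ioi hre 0)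
  rw [integral_exp_mul_complex_Ioi hre 0] at h
  convert h using 1
  · congr 1 with x
    simp [Complex.exp_im, mul_comm]
  · simp [Complex.normSq_apply, ← sq, add_comm, neg_div]

theorem integral_sin_mul_const (x t : ℝ) (hx : x ≠ 0) :
    ∫ s in (0)..t, sin (s * x) = (1 - cos (t * x)) / x := by
  rw [intervalIntegral.integral_comp_mul_right sin hx, integral_sin, zero_mul, cos_zero,
    smul_eq_mul, inv_mul_eq_div]

theorem integral_self_div_sq_add_sq {a : ℝ} (ha : a ≠ 0) (t : ℝ) :
    ∫ s in (0)..t, s / (a ^ 2 + s ^ 2) = log (1 + t ^ 2 / a ^ 2) / 2 := by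
  have hderiv (s : ℝ) :
      HasDerivAt (fun s ↦ log (1 + s ^ 2 / a ^ 2) / 2) (s / (a ^ 2 + s ^ 2)) s := by
    have hpos : 0 < 1 + s ^ 2 / a ^ 2 := by positivity
    refine ((((hasDerivAt_pow 2 s).div_const (a ^ 2)).const_add 1).log hpos.ne').div_const 2
      |>.congr_deriv ?_
    field_simp
    ring
  rw [intervalIntegral.integral_eq_sub_of_hasDerivAt (fun s _ ↦ hderiv s)
    (by apply Continuous.intervalIntegrable; fun_prop (disch := intro; positivity))]
  simp

theorem integrable_sin_mul_mul_exp_neg_mul {a : ℝ} (ha : 0 < a) (t : ℝ) :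
    Integrable (Function.uncurry fun s x : ℝ ↦ sin (s * x) * exp (-(a * x)))
      ((volume.restrict (Ioc 0 t)).prod (volume.restrict (Ioi 0))) := by
  have hexp : IntegrableOn (fun x : ℝ ↦ exp (-(a * x))) (Ioi 0) := by
    simpa using exp_neg_integrableOn_Ioi 0 ha
  refine ((integrable_const (1 : ℝ)).mul_prod hexp).mono' (by fun_prop)
    (ae_of_all _ fun p ↦ ?_)
  simp only [Function.uncurry, norm_mul, norm_eq_abs, abs_exp, one_mul]
  exact mul_le_of_le_one_left (exp_pos _).le (abs_sin_le_one _)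

theorem integrableOn_and_integral_cos_sub_one_mul_exp_neg_div_of_nonneg {a : ℝ} (ha : 0 < a)
    {t : ℝ} (ht : 0 ≤ t) :
    IntegrableOn (fun x ↦ (cos (t * x) - 1) * exp (-(a * x)) / x) (Ioi 0) ∧
      ∫ x in Ioi 0, (cos (t * x) - 1) * exp (-(a * x)) / x = -(log (1 + t ^ 2 / a ^ 2) / 2) := by
  have hF := integrable_sin_mul_mul_exp_neg_mul ha t
  have heq : (fun x ↦ (cos (t * x) - 1) * exp (-(a * x)) / x) =ᵐ[volume.restrict (Ioi 0)]
      fun x ↦ -∫ s in Ioc 0 t, sin (s * x) * exp (-(a * x)) := by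
    filter_upwards [ae_restrict_mem measurableSet_Ioi] with x (hx : 0 < x)
    rw [integral_mul_const, ← intervalIntegral.integral_of_le ht,
      integral_sin_mul_const x t hx.ne']
    ring
  refine ⟨hF.integral_prod_right.neg.congr heq.symm, ?_⟩
  rw [integral_congr_ae heq, integral_neg, ← integral_integral_swap hF,
    setIntegral_congr_fun measurableSet_Ioc fun s _ ↦ integral_sin_mul_exp_neg_mul ha s,
    ← intervalIntegral.integral_of_le ht, integral_self_div_sq_add_sq ha.ne']

theorem integrableOn_and_integral_cos_sub_one_mul_exp_neg_div {a : ℝ} (ha : 0 < a) (t : ℝ) :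
    IntegrableOn (fun x ↦ (cos (t * x) - 1) * exp (-(a * x)) / x) (Ioi 0) ∧
      ∫ x in Ioi 0, (cos (t * x) - 1) * exp (-(a * x)) / x = -(log (1 + t ^ 2 / a ^ 2) / 2) := by
  rcases le_total 0 t with ht | ht
  · exact integrableOn_and_integral_cos_sub_one_mul_exp_neg_div_of_nonneg ha ht
  · simpa only [neg_mul, cos_neg, neg_sq] using
      integrableOn_and_integral_cos_sub_one_mul_exp_neg_div_of_nonneg ha (neg_nonneg.mpr ht)

theorem integral_norm_cos_sub_one_mul_exp_neg_div {a : ℝ} (ha : 0 < a) (t : ℝ) :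
    ∫ x in Ioi 0, ‖(cos (t * x) - 1) * exp (-(a * x)) / x‖ = log (1 + t ^ 2 / a ^ 2) / 2 := by
  rw [← neg_neg (log _ / 2), ← (integrableOn_and_integral_cos_sub_one_mul_exp_neg_div ha t).2,
    ← integral_neg]
  refine setIntegral_congr_fun measurableSet_Ioi fun x (hx : 0 < x) ↦ norm_of_nonpos ?_
  exact div_nonpos_of_nonpos_of_nonneg
    (mul_nonpos_of_nonpos_of_nonneg (sub_nonpos.mpr (cos_le_one _)) (exp_pos _).le) hx.le

theorem hasSum_exp_neg_succ_mul {b : ℝ} (hb : 0 < b) :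
    HasSum (fun n : ℕ ↦ exp (-((n + 1) * b))) (exp b - 1)⁻¹ := by
  have h := (hasSum_geometric_of_lt_one (exp_pos (-b)).le
    (exp_lt_one_iff.mpr (neg_neg_of_pos hb))).mul_left (exp (-b))
  have hterm (n : ℕ) : exp (-b) * exp (-b) ^ n = exp (-((n + 1) * b)) := by
    rw [← pow_succ', ← exp_nat_mul]
    push_cast
    ring_nf
  have hsum : exp (-b) * (1 - exp (-b))⁻¹ = (exp b - 1)⁻¹ := by
    have : exp b - 1 ≠ 0 := (sub_pos.mpr (one_lt_exp_iff.mpr hb)).ne'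
    rw [exp_neg]
    field_simp
  simpa only [hterm, hsum] using h

theorem hasSum_two_mul_cos_sub_one_mul_exp_neg_div {x : ℝ} (hx : 0 < x) (t : ℝ) :
    HasSum (fun n : ℕ ↦ 2 * ((cos (t * x) - 1) * exp (-((n + 1) * π * x)) / x))
      ((cos (t * x) - 1) * (2 / (x * (exp (π * x) - 1)))) := by
  have hsum : (cos (t * x) - 1) * (2 / (x * (exp (π * x) - 1))) =
      2 * (cos (t * x) - 1) / x * (exp (π * x) - 1)⁻¹ := by
    field_simp
  rw [hsum]
  refine ((hasSum_exp_neg_succ_mul (mul_pos pi_pos hx)).mul_left _).congr_fun fun n ↦ ?_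
  rw [mul_assoc _ π x]
  ring

theorem Real.tendsto_euler_sinh_prod (x : ℝ) :
    Tendsto (fun n : ℕ ↦ π * x * ∏ j ∈ Finset.range n, ((1 : ℝ) + x ^ 2 / ((j : ℝ) + 1) ^ 2))
      atTop (𝓝 <| sinh (π * x)) := by
  convert (Complex.continuous_im.tendsto _).comp (Complex.tendsto_euler_sin_prod (x * Complex.I))
    using 1
  · ext1 n
    have hprod : ∏ j ∈ Finset.range n, ((1 : ℂ) - (x * Complex.I) ^ 2 / ((j : ℂ) + 1) ^ 2) =
        ((∏ j ∈ Finset.range n, (1 + x ^ 2 / ((j : ℝ) + 1) ^ 2) : ℝ) : ℂ) := by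
      push_cast
      refine Finset.prod_congr rfl fun j _ ↦ ?_
      rw [mul_pow, Complex.I_sq]
      ring
    rw [Function.comp_apply, hprod, ← mul_assoc, mul_right_comm _ Complex.I, Complex.mul_I_im]
    norm_cast
  · rw [← mul_assoc, Complex.sin_mul_I]
    simp [← Complex.ofReal_mul, Complex.sinh_ofReal_re]

theorem hasSum_log_one_add_sq_div_succ_mul_pi_sq {t : ℝ} (ht : t ≠ 0) :
    HasSum (fun n : ℕ ↦ log (1 + t ^ 2 / (((n : ℝ) + 1) * π) ^ 2)) (log (sinh t / t)) := by
  have hterm (n : ℕ) : t ^ 2 / (((n : ℝ) + 1) * π) ^ 2 = (t / π) ^ 2 / ((n : ℝ) + 1) ^ 2 := by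
    rw [mul_pow, div_pow, div_div, mul_comm (π ^ 2)]
  obtain ⟨S, hS⟩ : Summable fun n : ℕ ↦ log (1 + t ^ 2 / (((n : ℝ) + 1) * π) ^ 2) := by
    refine Real.summable_log_one_add_of_summable ?_
    refine (summable_pow_div_add ((t / π) ^ 2) 2 1 one_lt_two).of_norm.congr fun n ↦ ?_
    rw [hterm, Nat.cast_one]
  have hprod := (Real.hasProd_of_hasSum_log (fun n ↦ by positivity) hS).tendsto_prod_nat
  have heuler := (Real.tendsto_euler_sinh_prod (t / π)).div_const t
  rw [mul_div_cancel₀ t pi_ne_zero] at heuler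
  simp only [mul_div_cancel_left₀ _ ht, ← hterm] at heuler
  rwa [← tendsto_nhds_unique hprod heuler, log_exp]

/-- for every real `t ≠ 0`, the integral
`∫_0^∞ (cos(tx) − 1)·2/(x·(e^{πx} − 1)) dx` converges and equals `log(t/sinh(t))`. -/
theorem hyperbolic_sine_levy_exponent (t : ℝ) (ht : t ≠ 0) :
    IntegrableOn
      (fun x : ℝ => (Real.cos (t * x) - 1) * (2 / (x * (Real.exp (π * x) - 1))))
      (Set.Ioi 0) ∧
    (∫ x in Set.Ioi (0 : ℝ), (Real.cos (t * x) - 1) * (2 / (x * (Real.exp (π * x) - 1))))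
      = Real.log (t / Real.sinh t) := by
  set F : ℕ → ℝ → ℝ := fun n x ↦ 2 * ((cos (t * x) - 1) * exp (-((n + 1) * π * x)) / x)
  have hpos (n : ℕ) : 0 < ((n : ℝ) + 1) * π := by positivity
  have hterm (n : ℕ) := integrableOn_and_integral_cos_sub_one_mul_exp_neg_div (hpos n) t
  have hF_int (n : ℕ) : IntegrableOn (F n) (Ioi 0) := (hterm n).1.const_mul 2
  have hF_integral (n : ℕ) : ∫ x in Ioi 0, F n x = -log (1 + t ^ 2 / ((n + 1) * π) ^ 2) := by
    rw [integral_const_mul, (hterm n).2]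
    ring
  have hF_norm (n : ℕ) : ∫ x in Ioi 0, ‖F n x‖ = log (1 + t ^ 2 / ((n + 1) * π) ^ 2) := by
    simp only [F, norm_mul, Real.norm_two, integral_const_mul,
      integral_norm_cos_sub_one_mul_exp_neg_div (hpos n)]
    ring
  have hlog := hasSum_log_one_add_sq_div_succ_mul_pi_sq ht
  have hF_sum : Summable fun n ↦ ∫ x in Ioi 0, ‖F n x‖ := by
    simpa only [hF_norm] using hlog.summable
  have hF_hasSum : ∀ᵐ x ∂volume.restrict (Ioi 0),
      HasSum (F · x) ((cos (t * x) - 1) * (2 / (x * (exp (π * x) - 1)))) :=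
    ae_restrict_of_forall_mem measurableSet_Ioi fun x hx ↦
      hasSum_two_mul_cos_sub_one_mul_exp_neg_div hx t
  refine ⟨integrable_of_hasSum_of_summable_integral_norm hF_int hF_sum hF_hasSum, ?_⟩
  rw [(hasSum_integral_of_hasSum_of_summable_integral_norm hF_int hF_sum hF_hasSum).unique
    (by simpa only [hF_integral] using hlog.neg), ← log_inv, inv_div]
end

section
/- For every real α > 0 and every real t, the integral ∫_{−∞}^{∞} e^{its}·e^{αs}·(1 + e^s)^{−2α} ds converges and equals Γ(α + it)·Γ(α − it)/Γ(2α), where Γ is the complex Gamma function; in particular its value is the nonnegative real number |Γ(α + it)|²/Γ(2α). -/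
open Real MeasureTheory
open scoped ComplexConjugate

/-!
Substituting `u = σ(s) = eˢ / (1 + eˢ)`, which maps `ℝ` onto `(0, 1)` with `du = u (1 - u) ds`
and `1 - u = 1 / (1 + eˢ)`, turns `u^(a-1) (1-u)^(b-1) du` into `e^(as) (1 + eˢ)^(-(a+b)) ds`.
Hence the integral is `B(a, b) = Γ(a) Γ(b) / Γ(a + b)`. For `a = α + it` we have
`b = α - it = ā`, and `Γ(ā) = conj Γ(a)` makes the numerator `|Γ(a)|²`.
-/

namespace Real

lemma sigmoid_eq_exp_div (s : ℝ) : sigmoid s = exp s / (1 + exp s) := by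
  rw [sigmoid_def, exp_neg]
  field_simp
  ring

lemma one_sub_sigmoid (s : ℝ) : 1 - sigmoid s = (1 + exp s)⁻¹ := by
  rw [← sigmoid_neg, sigmoid_def, neg_neg]

lemma log_sigmoid (s : ℝ) : log (sigmoid s) = s - log (1 + exp s) := by
  rw [sigmoid_eq_exp_div, log_div (exp_pos s).ne' (by positivity), log_exp]

lemma log_one_sub_sigmoid (s : ℝ) : log (1 - sigmoid s) = -log (1 + exp s) := by
  rw [one_sub_sigmoid, log_inv]

end Real

lemma Complex.ofReal_cpow_eq_exp_mul_log {x : ℝ} (hx : 0 < x) (c : ℂ) :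
    (x : ℂ) ^ c = Complex.exp (c * Real.log x) := by
  rw [Complex.cpow_def_of_ne_zero (Complex.ofReal_ne_zero.2 hx.ne'), ← Complex.ofReal_log hx.le,
    mul_comm]

lemma abs_deriv_sigmoid_smul_beta_integrand (a b : ℂ) (s : ℝ) :
    |sigmoid s * (1 - sigmoid s)| •
        ((sigmoid s : ℂ) ^ (a - 1) * (1 - (sigmoid s : ℂ)) ^ (b - 1)) =
      Complex.exp (a * s) * ((1 + exp s : ℝ) : ℂ) ^ (-(a + b)) := by
  have hpos : 0 < sigmoid s := sigmoid_pos s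
  have hcompl : 0 < 1 - sigmoid s := sub_pos.2 (sigmoid_lt_one s)
  have hE : 0 < 1 + exp s := by positivity
  have hderiv : sigmoid s * (1 - sigmoid s) = exp (s - 2 * log (1 + exp s)) := by
    calc sigmoid s * (1 - sigmoid s) = exp (log (sigmoid s)) * exp (log (1 - sigmoid s)) := by
          rw [exp_log hpos, exp_log hcompl]
      _ = exp (s - 2 * log (1 + exp s)) := by
          rw [← exp_add, log_sigmoid, log_one_sub_sigmoid]
          ring_nf
  rw [abs_of_pos (mul_pos hpos hcompl), hderiv, ← Complex.ofReal_one, ← Complex.ofReal_sub,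
    Complex.real_smul, Complex.ofReal_cpow_eq_exp_mul_log hpos,
    Complex.ofReal_cpow_eq_exp_mul_log hcompl, Complex.ofReal_cpow_eq_exp_mul_log hE,
    log_sigmoid, log_one_sub_sigmoid, Complex.ofReal_exp, ← Complex.exp_add, ← Complex.exp_add,
    ← Complex.exp_add]
  congr 1
  push_cast
  ring

section SigmoidSubstitution

variable (a b : ℂ)

lemma integral_exp_mul_one_add_exp_cpow :
    ∫ s : ℝ, Complex.exp (a * s) * ((1 + exp s : ℝ) : ℂ) ^ (-(a + b)) =
      Complex.betaIntegral a b := by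
  have := integral_image_eq_integral_abs_deriv_smul MeasurableSet.univ
    (fun s _ => (hasDerivAt_sigmoid s).hasDerivWithinAt) sigmoid_injective.injOn
    (fun x : ℝ => (x : ℂ) ^ (a - 1) * (1 - (x : ℂ)) ^ (b - 1))
  simp only [Set.image_univ, range_sigmoid, Measure.restrict_univ,
    abs_deriv_sigmoid_smul_beta_integrand] at this
  rw [← this, Complex.betaIntegral, intervalIntegral.integral_of_le zero_le_one,
    integral_Ioc_eq_integral_Ioo]

variable {a b}

lemma integrable_exp_mul_one_add_exp_cpow (ha : 0 < a.re) (hb : 0 < b.re) :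
    Integrable fun s : ℝ => Complex.exp (a * s) * ((1 + exp s : ℝ) : ℂ) ^ (-(a + b)) := by
  have := (integrableOn_image_iff_integrableOn_abs_deriv_smul MeasurableSet.univ
    (fun s _ => (hasDerivAt_sigmoid s).hasDerivWithinAt) sigmoid_injective.injOn
    (fun x : ℝ => (x : ℂ) ^ (a - 1) * (1 - (x : ℂ)) ^ (b - 1))).1 ?_
  · simpa only [integrableOn_univ, abs_deriv_sigmoid_smul_beta_integrand] using this
  rw [Set.image_univ, range_sigmoid]
  exact (Complex.betaIntegral_convergent ha hb).1.mono_set Set.Ioo_subset_Ioc_self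

lemma integral_exp_mul_one_add_exp_cpow_eq_Gamma (ha : 0 < a.re) (hb : 0 < b.re) :
    ∫ s : ℝ, Complex.exp (a * s) * ((1 + exp s : ℝ) : ℂ) ^ (-(a + b)) =
      Complex.Gamma a * Complex.Gamma b / Complex.Gamma (a + b) := by
  have hab : 0 < (a + b).re := by rw [Complex.add_re]; positivity
  rw [integral_exp_mul_one_add_exp_cpow, Complex.Gamma_mul_Gamma_eq_betaIntegral ha hb,
    mul_div_cancel_left₀ _ (Complex.Gamma_ne_zero_of_re_pos hab)]

end SigmoidSubstitution

lemma Complex.Gamma_mul_Gamma_conj (z : ℂ) :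
    Complex.Gamma z * Complex.Gamma (conj z) = (‖Complex.Gamma z‖ ^ 2 : ℝ) := by
  rw [Complex.Gamma_conj, Complex.mul_conj, Complex.normSq_eq_norm_sq]

/-- for every real `α > 0` and real `t`, the integral
`∫_{−∞}^{∞} e^{its}·e^{αs}·(1 + e^s)^{−2α} ds` converges and equals
`Γ(α + it)·Γ(α − it)/Γ(2α)`, where `Γ` is the complex Gamma function; in particular its
value is the nonnegative real number `|Γ(α + it)|²/Γ(2α)`. -/
theorem generalized_logistic_charfun (α : ℝ) (hα : 0 < α) (t : ℝ) :
    Integrable (fun s : ℝ =>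
      Complex.exp ((t : ℂ) * (s : ℂ) * Complex.I) *
        ((Real.exp (α * s) * (1 + Real.exp s) ^ (-(2 * α)) : ℝ) : ℂ)) ∧
    (∫ s : ℝ, Complex.exp ((t : ℂ) * (s : ℂ) * Complex.I) *
        ((Real.exp (α * s) * (1 + Real.exp s) ^ (-(2 * α)) : ℝ) : ℂ))
      = Complex.Gamma ((α : ℂ) + (t : ℂ) * Complex.I) *
          Complex.Gamma ((α : ℂ) - (t : ℂ) * Complex.I) / Complex.Gamma (2 * (α : ℂ)) ∧
    Complex.Gamma ((α : ℂ) + (t : ℂ) * Complex.I) *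
        Complex.Gamma ((α : ℂ) - (t : ℂ) * Complex.I) / Complex.Gamma (2 * (α : ℂ))
      = ((‖Complex.Gamma ((α : ℂ) + (t : ℂ) * Complex.I)‖ ^ 2
            / Real.Gamma (2 * α) : ℝ) : ℂ) ∧
    0 ≤ ‖Complex.Gamma ((α : ℂ) + (t : ℂ) * Complex.I)‖ ^ 2
          / Real.Gamma (2 * α) := by
  set a : ℂ := α + t * Complex.I
  have ha : 0 < a.re := by simpa [a]
  have hconj : conj a = α - t * Complex.I := by simp [a, Complex.ext_iff]
  have hsum : a + conj a = ((2 * α : ℝ) : ℂ) := by rw [hconj]; push_cast; ring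
  have hintegrand : (fun s : ℝ => Complex.exp ((t : ℂ) * (s : ℂ) * Complex.I) *
        ((Real.exp (α * s) * (1 + Real.exp s) ^ (-(2 * α)) : ℝ) : ℂ)) =
      fun s : ℝ => Complex.exp (a * s) * ((1 + exp s : ℝ) : ℂ) ^ (-(a + conj a)) := by
    funext s
    rw [hsum, Complex.ofReal_mul, Complex.ofReal_cpow (by positivity), Complex.ofReal_exp,
      ← mul_assoc, ← Complex.exp_add]
    congr 2
    · simp only [a]; push_cast; ring
    · push_cast; ring
  have h2α : (2 * α : ℂ) = a + conj a := by rw [hsum]; push_cast; ring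
  rw [hintegrand, ← hconj, h2α]
  refine ⟨integrable_exp_mul_one_add_exp_cpow ha (by simpa using ha),
    integral_exp_mul_one_add_exp_cpow_eq_Gamma ha (by simpa using ha), ?_,
    div_nonneg (sq_nonneg _) (Real.Gamma_pos_of_pos (by positivity)).le⟩
  rw [Complex.Gamma_mul_Gamma_conj, hsum, Complex.Gamma_ofReal]
  norm_cast
end
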